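/- A linear operator Q : ℝ[x₁,…,xₙ] → ℝ[x₁,…,xₙ] is shift-invariant if and only if there exists a family of real numbers (a_α) indexed by multi-indices α ∈ ℕⁿ such that for every polynomial p, Q p = Σ_α a_α·(∂^α p), where the sum has only finitely many nonzero terms (it suffices to sum over |α| ≤ deg p); in that case necessarily a_α = (Q(x^α)) evaluated at 0, divided by α!. -/

import Mathlib

/-!
Shift invariance lets one read off `Q p` at `y` as `Q (τ_y p)` at `0`. Expanding `τ_y p` in
monomials is Taylor's formula: evaluating `∂^α` at `0` picks out `α!` times the coefficient of
`x^α`, and `∂^α` commutes with `τ_y`, so that coefficient of `τ_y p` is `(∂^α p)(y) / α!`.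
Hence `(Q p)(y) = Σ_α (∂^α p)(y) / α! · (Q x^α)(0)` for every `y`, which over the infinite field
`ℝ` is an identity of polynomials. Conversely an expansion commutes with shifts because each
`∂^α` does and shifts preserve the total degree, and applying it to `x^α` and evaluating at `0`
isolates `α! a_α`.
-/

noncomputable section

open scoped BigOperators
open MvPolynomial

/-- the shift operator `τ_y : p(x) ↦ p(x + y)`. -/
def shiftOp (n : ℕ) (y : Fin n → ℝ) :
    MvPolynomial (Fin n) ℝ →ₗ[ℝ] MvPolynomial (Fin n) ℝ :=
  (aeval fun j => X j + C (y j)).toLinearMap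

/-- the iterated formal partial derivative `∂^α = ∂₁^{α₁} ⋯ ∂ₙ^{αₙ}`. -/
def pderivPow (n : ℕ) (α : Fin n → ℕ) :
    MvPolynomial (Fin n) ℝ →ₗ[ℝ] MvPolynomial (Fin n) ℝ :=
  (List.ofFn fun j : Fin n =>
    (((pderiv j : Derivation ℝ (MvPolynomial (Fin n) ℝ)
        (MvPolynomial (Fin n) ℝ)).toLinearMap :
      Module.End ℝ (MvPolynomial (Fin n) ℝ)) ^ (α j))).prod

namespace MvPolynomial

variable {R σ : Type*} [CommSemiring R]

theorem coeff_pderiv_pow (i : σ) (k : ℕ) (p : MvPolynomial σ R) (m : σ →₀ ℕ) :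
    coeff m ((((pderiv i).toLinearMap : Module.End R (MvPolynomial σ R)) ^ k) p) =
      coeff (m + Finsupp.single i k) p * (m i + 1).ascFactorial k := by
  induction k generalizing p with
  | zero => simp
  | succ k ih =>
    rw [pow_succ, Module.End.mul_apply, ih, Derivation.coeFn_coe, coeff_pderiv,
      Nat.ascFactorial_succ, add_assoc, ← Finsupp.single_add]
    simp only [Finsupp.add_apply, Finsupp.single_eq_same]
    push_cast
    ring

theorem coeff_list_prod_pderiv_pow (α : σ → ℕ) {L : List σ} (hL : L.Nodup)
    (p : MvPolynomial σ R) (m : σ →₀ ℕ) :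
    coeff m ((L.map fun j =>
        ((pderiv j).toLinearMap : Module.End R (MvPolynomial σ R)) ^ α j).prod p) =
      coeff (m + (L.map fun j => Finsupp.single j (α j)).sum) p *
        (L.map fun j => ((m j + 1).ascFactorial (α j) : R)).prod := by
  induction L generalizing m with
  | nil => simp
  | cons j L ih =>
    obtain ⟨hj, hL⟩ := List.nodup_cons.mp hL
    have hfactors : L.map (fun i => (((m + Finsupp.single j (α j)) i + 1).ascFactorial (α i) : R)) =
        L.map fun i => ((m i + 1).ascFactorial (α i) : R) :=
      List.map_congr_left fun i hi => by simp [show j ≠ i by rintro rfl; exact hj hi]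
    rw [List.map_cons, List.prod_cons, Module.End.mul_apply, coeff_pderiv_pow, ih hL, hfactors]
    simp only [List.map_cons, List.sum_cons, List.prod_cons, add_assoc]
    ring

theorem totalDegree_aeval_le {τ : Type*} {g : σ → MvPolynomial τ R}
    (hg : ∀ i, (g i).totalDegree ≤ 1) (p : MvPolynomial σ R) :
    (aeval g p).totalDegree ≤ p.totalDegree := by
  conv_lhs => rw [p.as_sum, map_sum]
  refine totalDegree_finsetSum_le fun s hs => ?_
  rw [aeval_monomial, algebraMap_eq]
  refine (totalDegree_mul _ _).trans ?_
  rw [totalDegree_C, zero_add, Finsupp.prod]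
  calc (∏ i ∈ s.support, g i ^ s i).totalDegree
      ≤ ∑ i ∈ s.support, (g i ^ s i).totalDegree := totalDegree_finsetProd _ _
    _ ≤ ∑ i ∈ s.support, s i :=
      Finset.sum_le_sum fun i _ => (totalDegree_pow _ _).trans (mul_le_of_le_one_right' (hg i))
    _ ≤ p.totalDegree := le_totalDegree hs

theorem prod_X_pow_eq_monomial_equivFunOnFinite [Fintype σ] (α : σ → ℕ) :
    ∏ j, (X j : MvPolynomial σ R) ^ α j = monomial (Finsupp.equivFunOnFinite.symm α) 1 := by
  rw [monomial_eq, C_1, one_mul, Finsupp.prod_fintype _ _ fun _ => pow_zero _]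
  rfl

end MvPolynomial

def multiIndicesLE (σ : Type*) [Fintype σ] [DecidableEq σ] (d : ℕ) : Finset (σ → ℕ) :=
  (Fintype.piFinset fun _ : σ => Finset.range (d + 1)).filter fun α => ∑ j, α j ≤ d

theorem mem_multiIndicesLE {σ : Type*} [Fintype σ] [DecidableEq σ] {d : ℕ} {α : σ → ℕ} :
    α ∈ multiIndicesLE σ d ↔ ∑ j, α j ≤ d := by
  rw [multiIndicesLE, Finset.mem_filter, Fintype.mem_piFinset, and_iff_right_iff_imp]
  exact fun h j => Finset.mem_range_succ_iff.mpr
    ((Finset.single_le_sum (fun _ _ => Nat.zero_le _) (Finset.mem_univ j)).trans h)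

theorem MvPolynomial.sum_coeff_smul_prod_X_pow {R σ : Type*} [CommSemiring R] [Fintype σ]
    [DecidableEq σ] {q : MvPolynomial σ R} {d : ℕ} (hq : q.totalDegree ≤ d) :
    ∑ α ∈ multiIndicesLE σ d, coeff (Finsupp.equivFunOnFinite.symm α) q • ∏ j, X j ^ α j = q := by
  ext m
  simp only [coeff_sum, coeff_smul, prod_X_pow_eq_monomial_equivFunOnFinite, coeff_monomial,
    smul_eq_mul, mul_ite, mul_one, mul_zero, Equiv.symm_apply_eq]
  rw [Finset.sum_ite_eq', Equiv.symm_apply_apply, ite_eq_left_iff, eq_comm]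
  intro hm
  refine notMem_support_iff.mp fun hs => hm (mem_multiIndicesLE.mpr ?_)
  have := le_totalDegree hs
  rw [Finsupp.sum_fintype _ _ fun _ => rfl] at this
  exact this.trans hq

section

variable {n : ℕ}

theorem eval_zero_shiftOp (y : Fin n → ℝ) (p : MvPolynomial (Fin n) ℝ) :
    eval 0 (shiftOp n y p) = eval y p := by
  induction p using MvPolynomial.induction_on with
  | C a => simp [shiftOp]
  | add p q hp hq => rw [map_add, map_add, map_add, hp, hq]
  | mul_X p i hp => simp [shiftOp, ← hp]

theorem shiftOp_neg_shiftOp (y : Fin n → ℝ) (p : MvPolynomial (Fin n) ℝ) :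
    shiftOp n (-y) (shiftOp n y p) = p := by
  simp only [shiftOp, AlgHom.toLinearMap_apply, ← AlgHom.comp_apply, comp_aeval]
  simp

theorem totalDegree_shiftOp (y : Fin n → ℝ) (p : MvPolynomial (Fin n) ℝ) :
    (shiftOp n y p).totalDegree = p.totalDegree := by
  have hle : ∀ (y : Fin n → ℝ) p, (shiftOp n y p).totalDegree ≤ p.totalDegree :=
    fun y => totalDegree_aeval_le fun j => (totalDegree_add _ _).trans (by simp)
  refine (hle y p).antisymm ?_
  conv_lhs => rw [← shiftOp_neg_shiftOp y p]
  exact hle _ _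

theorem commute_shiftOp_pderiv (y : Fin n → ℝ) (j : Fin n) :
    Commute (shiftOp n y) ((pderiv j).toLinearMap : Module.End ℝ (MvPolynomial (Fin n) ℝ)) := by
  refine LinearMap.ext fun p => ?_
  induction p using MvPolynomial.induction_on with
  | C a => simp [shiftOp]
  | add p q hp hq => simp only [map_add, hp, hq]
  | mul_X p i hp =>
    simp only [Module.End.mul_apply, Derivation.coeFn_coe, shiftOp,
      AlgHom.toLinearMap_apply] at hp ⊢
    rw [pderiv_mul, map_mul, pderiv_mul, ← hp]
    by_cases h : i = j <;> simp [pderiv_X, h]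

theorem commute_shiftOp_pderivPow (y : Fin n → ℝ) (α : Fin n → ℕ) :
    Commute (shiftOp n y) (pderivPow n α) :=
  Commute.list_prod_right _ _ fun _ hf => by
    obtain ⟨j, rfl⟩ := List.mem_ofFn.mp hf
    exact (commute_shiftOp_pderiv y j).pow_right _

theorem pderivPow_shiftOp (y : Fin n → ℝ) (α : Fin n → ℕ) (p : MvPolynomial (Fin n) ℝ) :
    pderivPow n α (shiftOp n y p) = shiftOp n y (pderivPow n α p) :=
  (LinearMap.congr_fun (commute_shiftOp_pderivPow y α).eq p).symm

theorem eval_zero_pderivPow (α : Fin n → ℕ) (q : MvPolynomial (Fin n) ℝ) :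
    eval 0 (pderivPow n α q) =
      coeff (Finsupp.equivFunOnFinite.symm α) q * ∏ j, ((α j).factorial : ℝ) := by
  rw [eval_zero, constantCoeff_eq, pderivPow, List.ofFn_eq_map,
    coeff_list_prod_pderiv_pow _ (List.nodup_finRange n), ← Fin.prod_univ_def,
    ← Fin.sum_univ_def, ← Finsupp.equivFunOnFinite_symm_eq_sum, zero_add]
  simp [Nat.one_ascFactorial]

theorem coeff_shiftOp_mul_prod_factorial (y : Fin n → ℝ) (p : MvPolynomial (Fin n) ℝ)
    (α : Fin n → ℕ) :
    coeff (Finsupp.equivFunOnFinite.symm α) (shiftOp n y p) * ∏ j, ((α j).factorial : ℝ) =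
      eval y (pderivPow n α p) := by
  rw [← eval_zero_pderivPow, pderivPow_shiftOp, eval_zero_shiftOp]

variable {Q : MvPolynomial (Fin n) ℝ →ₗ[ℝ] MvPolynomial (Fin n) ℝ}

theorem eq_sum_pderivPow_of_commute_shiftOp
    (hQ : ∀ y p, Q (shiftOp n y p) = shiftOp n y (Q p)) (p : MvPolynomial (Fin n) ℝ) :
    Q p = ∑ α ∈ multiIndicesLE (Fin n) p.totalDegree,
      (eval 0 (Q (∏ j, X j ^ α j)) / ∏ j, ((α j).factorial : ℝ)) • pderivPow n α p := by
  refine MvPolynomial.funext fun y => ?_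
  have hτ := sum_coeff_smul_prod_X_pow (totalDegree_shiftOp y p).le
  calc eval y (Q p) = eval 0 (Q (shiftOp n y p)) := by rw [hQ, eval_zero_shiftOp]
    _ = ∑ α ∈ multiIndicesLE (Fin n) p.totalDegree,
          coeff (Finsupp.equivFunOnFinite.symm α) (shiftOp n y p) *
            eval 0 (Q (∏ j, X j ^ α j)) := by
      conv_lhs => rw [← hτ]
      simp only [map_sum, map_smul, smul_eval]
    _ = _ := by
      simp only [map_sum, smul_eval]
      refine Finset.sum_congr rfl fun α _ => ?_
      rw [← coeff_shiftOp_mul_prod_factorial]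
      field_simp

theorem commute_shiftOp_of_eq_sum_pderivPow {a : (Fin n → ℕ) → ℝ}
    (ha : ∀ p, Q p = ∑ α ∈ multiIndicesLE (Fin n) p.totalDegree, a α • pderivPow n α p)
    (y : Fin n → ℝ) (p : MvPolynomial (Fin n) ℝ) :
    Q (shiftOp n y p) = shiftOp n y (Q p) := by
  rw [ha, ha p, totalDegree_shiftOp, map_sum]
  simp only [map_smul, pderivPow_shiftOp]

theorem eq_div_of_eq_sum_pderivPow {a : (Fin n → ℕ) → ℝ}
    (ha : ∀ p, Q p = ∑ α ∈ multiIndicesLE (Fin n) p.totalDegree, a α • pderivPow n α p)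
    (α : Fin n → ℕ) :
    a α = eval 0 (Q (∏ j, X j ^ α j)) / ∏ j, ((α j).factorial : ℝ) := by
  rw [prod_X_pow_eq_monomial_equivFunOnFinite, eq_div_iff (by positivity), ha, map_sum]
  have hα : α ∈ multiIndicesLE (Fin n)
      (monomial (Finsupp.equivFunOnFinite.symm α) (1 : ℝ)).totalDegree := by
    rw [mem_multiIndicesLE, totalDegree_monomial _ one_ne_zero,
      Finsupp.equivFunOnFinite_symm_sum]
  simp only [smul_eval, eval_zero_pderivPow, coeff_monomial, EmbeddingLike.apply_eq_iff_eq,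
    ite_mul, one_mul, zero_mul, mul_ite, mul_zero, Finset.sum_ite_eq, if_pos hα]

end

/-- **Multivariate expansion theorem**: a linear operator `Q` on `ℝ[x₁,…,xₙ]` is
shift-invariant iff `Q p = Σ_α a_α ∂^α p` (the sum taken over `|α| ≤ deg p`);
in that case necessarily `a_α = (Q(x^α))(0)/α!`. -/
theorem shift_invariant_iff_expansion (n : ℕ)
    (Q : MvPolynomial (Fin n) ℝ →ₗ[ℝ] MvPolynomial (Fin n) ℝ) :
    ((∀ (y : Fin n → ℝ) (p : MvPolynomial (Fin n) ℝ),
        Q (shiftOp n y p) = shiftOp n y (Q p)) ↔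
      (∃ a : (Fin n → ℕ) → ℝ, ∀ p : MvPolynomial (Fin n) ℝ,
        Q p = ∑ α ∈ (Fintype.piFinset fun _ : Fin n =>
                Finset.range (p.totalDegree + 1)).filter
                (fun α => ∑ j : Fin n, α j ≤ p.totalDegree),
              a α • pderivPow n α p)) ∧
    (∀ a : (Fin n → ℕ) → ℝ,
      (∀ p : MvPolynomial (Fin n) ℝ,
        Q p = ∑ α ∈ (Fintype.piFinset fun _ : Fin n =>
                Finset.range (p.totalDegree + 1)).filter
                (fun α => ∑ j : Fin n, α j ≤ p.totalDegree),
              a α • pderivPow n α p) →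
      ∀ α : Fin n → ℕ,
        a α = MvPolynomial.eval (0 : Fin n → ℝ) (Q (∏ j : Fin n, X j ^ α j))
                / ∏ j : Fin n, (Nat.factorial (α j) : ℝ)) := by
  refine ⟨⟨fun hQ => ⟨_, eq_sum_pderivPow_of_commute_shiftOp hQ⟩, ?_⟩,
    fun a ha => eq_div_of_eq_sum_pderivPow ha⟩
  rintro ⟨a, ha⟩
  exact commute_shiftOp_of_eq_sum_pderivPow ha
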